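/- If every accepting run of a one-counter automaton A of length greater than a bound s can be written as π + d for some accepting run π with avail(π) = avail(π + d) and direction d available at π, then the Parikh image of L(A) equals the union over all accepting runs π of length at most s of the linear sets L(Φ(π); Φ(avail(π))). -/
import Mathlib


/-- A transition of a one-counter automaton without zero tests:
(source state, optional letter read, counter change, target state). -/
abbrev Tr (Q A : Type) : Type := Q × Option A × ℤ × Q

/-- Source state of a transition. -/
def Tr.src {Q A : Type} (t : Tr Q A) : Q := t.1
/-- Target state of a transition. -/
def Tr.tgt {Q A : Type} (t : Tr Q A) : Q := t.2.2.2
/-- Counter change of a transition. -/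
def Tr.wt {Q A : Type} (t : Tr Q A) : ℤ := t.2.2.1
/-- Letter (or ε) read by a transition. -/
def Tr.lab {Q A : Type} (t : Tr Q A) : Option A := t.2.1

/-- The effect of a walk on the counter: total counter change. -/
def effect {Q A : Type} (l : List (Tr Q A)) : ℤ := (l.map Tr.wt).sum

/-- The word read along a walk. -/
def word {Q A : Type} (l : List (Tr Q A)) : List A := l.filterMap Tr.lab

/-- A walk of the automaton M: a sequence of transitions of M with matching
intermediate states. -/
def IsWalk {Q A : Type} (M : Set (Tr Q A)) (l : List (Tr Q A)) : Prop :=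
  (∀ t ∈ l, t ∈ M) ∧ l.Chain' (fun t t' => t.tgt = t'.src)

/-- The state visited at position i (0 ≤ i ≤ length) of a walk starting at p. -/
def stateAt {Q A : Type} (p : Q) (l : List (Tr Q A)) (i : ℕ) : Q :=
  match (l.drop i).head? with
  | some t => t.src
  | none => (l.getLast?.map Tr.tgt).getD p

/-- The counter value at position i of a walk starting at counter value c. -/
def counterAt {Q A : Type} (c : ℤ) (l : List (Tr Q A)) (i : ℕ) : ℤ :=
  c + effect (l.take i)

/-- drop of a walk: the minimal counter value needed at its start so that the
counter stays nonnegative throughout (maximum over prefixes of minus the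
prefix effect). -/
def dropVal {Q A : Type} (l : List (Tr Q A)) : ℤ :=
  (l.inits.map fun pfx => -effect pfx).foldr max 0

/-- A valid run of M starting in configuration (p, c): a walk starting in
state p whose counter values all stay nonnegative. -/
def ValidFrom {Q A : Type} (M : Set (Tr Q A)) (p : Q) (c : ℤ) (l : List (Tr Q A)) : Prop :=
  IsWalk M l ∧ (∀ t ∈ l.head?, t.src = p) ∧ 0 ≤ c ∧
    ∀ i ≤ l.length, 0 ≤ counterAt c l i

/-- A walk of M from state p to state q. -/
def WalkFromTo {Q A : Type} (M : Set (Tr Q A)) (p : Q) (l : List (Tr Q A)) (q : Q) : Prop :=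
  IsWalk M l ∧ (∀ t ∈ l.head?, t.src = p) ∧ (∀ t ∈ l.getLast?, t.tgt = q) ∧
    (l = [] → p = q)

/-- A direction: a pair of anchored cycles (α at state p, β at state q). -/
structure Dir (Q A : Type) where
  p : Q
  al : List (Tr Q A)
  q : Q
  bl : List (Tr Q A)

/-- Insertion of a direction d into a run (given by its walk l starting at
state q0): there is a factorization l = l₁·l₂·l₃ such that the result is
l₁·α·l₂·β·l₃, with α inserted at an occurrence of state p and β at a later
occurrence of state q. -/
def Inserted {Q A : Type} (q0 : Q) (d : Dir Q A) (l l' : List (Tr Q A)) : Prop :=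
  ∃ l₁ l₂ l₃ : List (Tr Q A), l = l₁ ++ l₂ ++ l₃ ∧
    l' = l₁ ++ d.al ++ l₂ ++ d.bl ++ l₃ ∧
    stateAt q0 l l₁.length = d.p ∧
    stateAt q0 l (l₁.length + l₂.length) = d.q

/-- A direction of the simple OCA M: a pair of cycles (α on p, β on q) with
0 < |α| + |β|, effect(α) ≥ 0 and effect(α) + effect(β) = 0. -/
def IsDir {Q A : Type} (M : Set (Tr Q A)) (d : Dir Q A) : Prop :=
  WalkFromTo M d.p d.al d.p ∧ WalkFromTo M d.q d.bl d.q ∧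
  0 < d.al.length + d.bl.length ∧ 0 ≤ effect d.al ∧
  effect d.al + effect d.bl = 0

/-- An accepting run of the simple OCA M: from (q0, 0) to (qf, 0). -/
def AccRun {Q A : Type} (M : Set (Tr Q A)) (q0 qf : Q) (l : List (Tr Q A)) : Prop :=
  ValidFrom M q0 0 l ∧ stateAt q0 l l.length = qf ∧ counterAt 0 l l.length = 0

/-- The set of directions available at an accepting run. -/
def Avail {Q A : Type} (M : Set (Tr Q A)) (q0 qf : Q) (l : List (Tr Q A)) :
    Set (Dir Q A) :=
  {d | IsDir M d ∧ ∃ l', Inserted q0 d l l' ∧ AccRun M q0 qf l'}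

/-- Parikh image of (the word read by) a run. -/
def parikhRun {Q A : Type} [DecidableEq A] (l : List (Tr Q A)) : A → ℕ :=
  fun a => (word l).count a

/-- Parikh image of a direction: Φ(α) + Φ(β). -/
def parikhDir {Q A : Type} [DecidableEq A] (d : Dir Q A) : A → ℕ :=
  fun a => (word d.al).count a + (word d.bl).count a

/-- The linear set with base b and (possibly infinite) period set S:
all vectors b + λ₁p₁ + … + λₘpₘ with λᵢ ∈ ℕ and pᵢ ∈ S. -/
def LinSet {A : Type} (b : A → ℕ) (S : Set (A → ℕ)) : Set (A → ℕ) :=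
  {v | ∃ (m : ℕ) (pv : Fin m → A → ℕ) (lam : Fin m → ℕ),
    (∀ i, pv i ∈ S) ∧ v = b + ∑ i, lam i • pv i}

lemma parikh_inserted {Q A : Type} [DecidableEq A] {q0 : Q} {d : Dir Q A}
    {l l' : List (Tr Q A)} (h : Inserted q0 d l l') :
    parikhRun l' = parikhRun l + parikhDir d := by
  obtain ⟨l₁, l₂, l₃, hl, hl', -, -⟩ := h
  funext a
  subst hl hl'
  simp [parikhRun, parikhDir, word, List.filterMap_append, List.count_append]
  ring

lemma length_inserted {Q A : Type} {q0 : Q} {d : Dir Q A}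
    {l l' : List (Tr Q A)} (h : Inserted q0 d l l') :
    l'.length = l.length + d.al.length + d.bl.length := by
  obtain ⟨l₁, l₂, l₃, hl, hl', -, -⟩ := h
  subst hl hl'
  simp; ring

lemma linset_add_period {A : Type} {b v p : A → ℕ} {S : Set (A → ℕ)}
    (hv : v ∈ LinSet b S) (hp : p ∈ S) : v + p ∈ LinSet b S := by
  obtain ⟨m, pv, lam, hpv, hveq⟩ := hv
  refine ⟨m + 1, Fin.cons p pv, Fin.cons 1 lam, ?_, ?_⟩
  · intro i
    refine Fin.cases ?_ ?_ i <;> simp [hp, hpv]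
  · rw [Fin.sum_univ_succ, hveq]
    simp [add_assoc, add_comm, add_left_comm]

section Aux

variable {Q A : Type} [DecidableEq A] (M : Set (Tr Q A)) (q0 qf : Q)

lemma avail_step
    (hmono : ∀ π π' d, AccRun M q0 qf π → d ∈ Avail M q0 qf π →
      Inserted q0 d π π' → AccRun M q0 qf π' →
        Avail M q0 qf π ⊆ Avail M q0 qf π')
    {π : List (Tr Q A)} {d : Dir Q A}
    (hacc : AccRun M q0 qf π) (hd : d ∈ Avail M q0 qf π) :
    ∃ π', AccRun M q0 qf π' ∧ parikhRun π' = parikhRun π + parikhDir d ∧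
      Avail M q0 qf π ⊆ Avail M q0 qf π' := by
  obtain ⟨hdir, π', hins, hacc'⟩ := hd
  exact ⟨π', hacc', parikh_inserted hins,
    hmono π π' d hacc ⟨hdir, π', hins, hacc'⟩ hins hacc'⟩

lemma avail_rep
    (hmono : ∀ π π' d, AccRun M q0 qf π → d ∈ Avail M q0 qf π →
      Inserted q0 d π π' → AccRun M q0 qf π' →
        Avail M q0 qf π ⊆ Avail M q0 qf π') :
    ∀ (n : ℕ) (π : List (Tr Q A)) (d : Dir Q A),
    AccRun M q0 qf π → d ∈ Avail M q0 qf π →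
    ∃ π', AccRun M q0 qf π' ∧ parikhRun π' = parikhRun π + n • parikhDir d ∧
      Avail M q0 qf π ⊆ Avail M q0 qf π' := by
  intro n
  induction n with
  | zero => intro π d hacc _; exact ⟨π, hacc, by simp, subset_rfl⟩
  | succ n ih =>
    intro π d hacc hd
    obtain ⟨π₁, hacc₁, hpar₁, hsub₁⟩ := avail_step M q0 qf hmono hacc hd
    obtain ⟨π', hacc', hpar', hsub'⟩ := ih π₁ d hacc₁ (hsub₁ hd)
    refine ⟨π', hacc', ?_, hsub₁.trans hsub'⟩
    rw [hpar', hpar₁, succ_nsmul]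
    simp [add_assoc, add_comm, add_left_comm]

lemma avail_sum
    (hmono : ∀ π π' d, AccRun M q0 qf π → d ∈ Avail M q0 qf π →
      Inserted q0 d π π' → AccRun M q0 qf π' →
        Avail M q0 qf π ⊆ Avail M q0 qf π') :
    ∀ (m : ℕ) (pv : Fin m → A → ℕ) (lam : Fin m → ℕ) (π : List (Tr Q A)),
    AccRun M q0 qf π → (∀ i, ∃ d ∈ Avail M q0 qf π, parikhDir d = pv i) →
    ∃ π', AccRun M q0 qf π' ∧
      parikhRun π' = parikhRun π + ∑ i, lam i • pv i := by
  intro m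
  induction m with
  | zero => intro pv lam π hacc _; exact ⟨π, hacc, by simp⟩
  | succ m ih =>
    intro pv lam π hacc hpv
    obtain ⟨d, hd, hdeq⟩ := hpv 0
    obtain ⟨π₁, hacc₁, hpar₁, hsub₁⟩ :=
      avail_rep M q0 qf hmono (lam 0) π d hacc hd
    obtain ⟨π', hacc', hpar'⟩ := ih (fun i => pv i.succ) (fun i => lam i.succ)
      π₁ hacc₁ (fun i => by
        obtain ⟨d', hd', hdeq'⟩ := hpv i.succ
        exact ⟨d', hsub₁ hd', hdeq'⟩)
    refine ⟨π', hacc', ?_⟩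
    rw [hpar', hpar₁, Fin.sum_univ_succ, hdeq]
    simp [add_assoc, add_comm, add_left_comm]

end Aux

/-- If every accepting run of length > s can be safely unpumped (written as
π + d with avail(π) = avail(π + d), π accepting, d available at π), and
availability is monotone under insertion and insertion of available directions
preserves acceptance, then the Parikh image of L(A) is the union, over
accepting runs π of length ≤ s, of the linear sets L(Φ(π); Φ(avail(π))). -/
theorem parikh_semilinear_of_safe_unpumping {Q A : Type} [DecidableEq A]
    (M : Set (Tr Q A)) (q0 qf : Q) (s : ℕ)
    (hunpump : ∀ π', AccRun M q0 qf π' → s < π'.length →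
      ∃ π d, AccRun M q0 qf π ∧ d ∈ Avail M q0 qf π ∧ Inserted q0 d π π' ∧
        Avail M q0 qf π = Avail M q0 qf π')
    (hmono : ∀ π π' d, AccRun M q0 qf π → d ∈ Avail M q0 qf π →
      Inserted q0 d π π' → AccRun M q0 qf π' →
        Avail M q0 qf π ⊆ Avail M q0 qf π')
    (hinsacc : ∀ π d, AccRun M q0 qf π → d ∈ Avail M q0 qf π →
      ∀ π', Inserted q0 d π π' → AccRun M q0 qf π') :
    {v | ∃ l, AccRun M q0 qf l ∧ parikhRun l = v} =
      ⋃ l ∈ {l : List (Tr Q A) | AccRun M q0 qf l ∧ l.length ≤ s},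
        LinSet (parikhRun l) {u | ∃ d ∈ Avail M q0 qf l, parikhDir d = u} := by
  have key : ∀ (n : ℕ) (π : List (Tr Q A)), π.length ≤ n → AccRun M q0 qf π →
      ∃ σ, AccRun M q0 qf σ ∧ σ.length ≤ s ∧ Avail M q0 qf σ = Avail M q0 qf π ∧
        parikhRun π ∈
          LinSet (parikhRun σ) {u | ∃ d ∈ Avail M q0 qf σ, parikhDir d = u} := by
    intro n
    induction n with
    | zero =>
      intro π hlen hacc
      refine ⟨π, hacc, ?_, rfl, ⟨0, Fin.elim0, Fin.elim0, fun i => i.elim0, by simp⟩⟩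
      omega
    | succ n ih =>
      intro π' hlen hacc'
      by_cases hs : π'.length ≤ s
      · exact ⟨π', hacc', hs, rfl, ⟨0, Fin.elim0, Fin.elim0, fun i => i.elim0, by simp⟩⟩
      · obtain ⟨π, d, hacc, hd, hins, heq⟩ := hunpump π' hacc' (by omega)
        have hlt : π.length < π'.length := by
          have h1 := length_inserted hins
          have h2 : 0 < d.al.length + d.bl.length := hd.1.2.2.1
          omega
        obtain ⟨σ, haccσ, hlenσ, havσ, hmem⟩ := ih π (by omega) hacc
        refine ⟨σ, haccσ, hlenσ, havσ.trans heq, ?_⟩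
        have : parikhRun π' = parikhRun π + parikhDir d := parikh_inserted hins
        rw [this]
        exact linset_add_period hmem ⟨d, havσ ▸ hd, rfl⟩
  ext v
  simp only [Set.mem_setOf_eq, Set.mem_iUnion]
  constructor
  · rintro ⟨π, hacc, rfl⟩
    obtain ⟨σ, haccσ, hlenσ, -, hmem⟩ := key π.length π le_rfl hacc
    exact ⟨σ, ⟨haccσ, hlenσ⟩, hmem⟩
  · rintro ⟨σ, ⟨haccσ, -⟩, m, pv, lam, hpv, rfl⟩
    obtain ⟨π', hacc', hpar'⟩ := avail_sum M q0 qf hmono m pv lam σ haccσ hpv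
    exact ⟨π', hacc', hpar'⟩
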